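/- arXiv:1409.5609 — 2 statements merged into one kernel-verified Lean document; each statement's English description precedes it below -/
import Mathlib

section
/- If G is a finite connected graph, then its porous exponential domination number satisfies γ*_e(G) ≥ ⌈(diam(G) + 2)/4⌉, where diam(G) is the diameter of G (the maximum distance between two vertices of G). -/
open Classical in
/-- The porous exponential domination weight of a set `S` at a vertex `v`:
`∑_{u ∈ S} 1 / 2 ^ (d(u, v) - 1)`, where vertices at infinite distance from `v`
contribute `0`.  (Note `2 * (1/2) ^ d = 1 / 2 ^ (d - 1)` including for `d = 0`.) -/
noncomputable def expWeight {V : Type*} (G : SimpleGraph V) (S : Finset V) (v : V) : ℝ :=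
  ∑ u ∈ S, if G.Reachable u v then 2 * (2 : ℝ)⁻¹ ^ G.dist u v else 0

/-- `S` is a porous exponential dominating set for `G` if every vertex receives
total weight at least 1. -/
def IsPorousExpDomSet {V : Type*} (G : SimpleGraph V) (S : Finset V) : Prop :=
  ∀ v, 1 ≤ expWeight G S v

/-- The porous exponential domination number `γ*ₑ(G)`: the smallest cardinality of a
porous exponential dominating set for `G` (`⊤` if there is none). -/
noncomputable def porousExpDomNum {V : Type*} (G : SimpleGraph V) : ℕ∞ :=
  sInf {n : ℕ∞ | ∃ S : Finset V, IsPorousExpDomSet G S ∧ (S.card : ℕ∞) = n}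


noncomputable def mw (a i : ℤ) : ℝ := 2 * (2:ℝ)⁻¹ ^ (i - a).natAbs

noncomputable def wsum (M : Multiset ℤ) (i : ℤ) : ℝ := (M.map (fun a => mw a i)).sum

def msq (M : Multiset ℤ) : ℕ := (M.map (fun a => a.toNat * a.toNat)).sum

lemma mw_nonneg (a i : ℤ) : 0 ≤ mw a i := by
  unfold mw; positivity

lemma wsum_cons (a : ℤ) (M : Multiset ℤ) (i : ℤ) :
    wsum (a ::ₘ M) i = mw a i + wsum M i := by
  simp [wsum]

lemma wsum_zero (i : ℤ) : wsum 0 i = 0 := by simp [wsum]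

lemma wsum_nonneg (M : Multiset ℤ) (i : ℤ) : 0 ≤ wsum M i :=
  Multiset.sum_nonneg (by simp only [Multiset.mem_map]; rintro _ ⟨a, _, rfl⟩; exact mw_nonneg a i)

lemma msq_cons (a : ℤ) (M : Multiset ℤ) : msq (a ::ₘ M) = a.toNat * a.toNat + msq M := by
  simp [msq]

lemma half_pow_le_one (n : ℕ) : ((2:ℝ)⁻¹) ^ n ≤ 1 :=
  pow_le_one₀ (by norm_num) (by norm_num)

lemma half_pow_mono {m n : ℕ} (h : m ≤ n) : ((2:ℝ)⁻¹) ^ n ≤ ((2:ℝ)⁻¹) ^ m :=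
  pow_le_pow_of_le_one (by norm_num) (by norm_num) h

lemma half_pow_pos (n : ℕ) : (0:ℝ) < ((2:ℝ)⁻¹) ^ n := by positivity

lemma mw_eq_of_le {a i : ℤ} (h : a ≤ i) : mw a i = 2 * (2:ℝ)⁻¹ ^ (i - a).toNat := by
  unfold mw; congr 2; omega

lemma mw_eq_of_ge {a i : ℤ} (h : i ≤ a) : mw a i = 2 * (2:ℝ)⁻¹ ^ (a - i).toNat := by
  unfold mw; congr 2; omega

lemma absorb_mass {b d' i : ℤ} (hi : i ≤ d') (hb : d' ≤ b) :
    mw b i = (2 * (2:ℝ)⁻¹ ^ (b - d').toNat) * (2:ℝ)⁻¹ ^ (d' - i).toNat := by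
  rw [mw_eq_of_ge (by omega)]
  have : (b - i).toNat = (b - d').toNat + (d' - i).toNat := by omega
  rw [this, pow_add]; ring

lemma absorb_ph {d d' i : ℤ} (hi : i ≤ d') (hd : d' ≤ d) (W : ℝ) :
    W * (2:ℝ)⁻¹ ^ (d - i).toNat = (W * (2:ℝ)⁻¹ ^ (d - d').toNat) * (2:ℝ)⁻¹ ^ (d' - i).toNat := by
  have : (d - i).toNat = (d - d').toNat + (d' - i).toNat := by omega
  rw [this, pow_add]; ring

lemma geom_bound : ∀ (n : ℕ) (M : Multiset ℤ), M.card = n → M.Nodup → ∀ (m d : ℤ), m ≤ d →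
    (∀ a ∈ M, a ≤ m) → wsum M d ≤ 4 * (2:ℝ)⁻¹ ^ (d - m).toNat := by
  intro n
  induction n using Nat.strong_induction_on with
  | _ n IH =>
    intro M hcard hnd m d hmd hbound
    rcases Multiset.empty_or_exists_mem M with hM | ⟨x, hxM⟩
    · subst hM; rw [wsum_zero]; positivity
    · have hne : M.toFinset.Nonempty := ⟨x, Multiset.mem_toFinset.mpr hxM⟩
      set b := M.toFinset.max' hne with hb
      have hbM : b ∈ M := Multiset.mem_toFinset.mp (M.toFinset.max'_mem hne)
      have hbmax : ∀ a ∈ M, a ≤ b := fun a ha =>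
        M.toFinset.le_max' a (Multiset.mem_toFinset.mpr ha)
      have hbm : b ≤ m := hbound b hbM
      have hME : M = b ::ₘ M.erase b := (Multiset.cons_erase hbM).symm
      have hndE : (M.erase b).Nodup := hnd.erase b
      have hEb : ∀ a ∈ M.erase b, a ≤ b - 1 := by
        intro a ha
        have haM : a ∈ M := Multiset.mem_of_mem_erase ha
        have : a ≠ b := by
          intro h; subst h
          exact (Multiset.Nodup.notMem_erase hnd) ha
        have := hbmax a haM
        omega
      have hcardE : (M.erase b).card = n - 1 := by
        rw [Multiset.card_erase_of_mem hbM, hcard]; rfl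
      have hn1 : n - 1 < n := by
        have : 0 < n := by
          rw [← hcard]; exact Multiset.card_pos.mpr (by rintro rfl; simp at hxM)
        omega
      have hrec := IH (n-1) hn1 (M.erase b) hcardE hndE (b-1) d (by omega) hEb
      have hsplit : wsum M d = mw b d + wsum (M.erase b) d := by
        conv_lhs => rw [hME]
        rw [wsum_cons]
      rw [hsplit]
      have h1 : mw b d = 2 * (2:ℝ)⁻¹ ^ (d - b).toNat := mw_eq_of_le (by omega)
      have he1 : (d - (b-1)).toNat = (d - b).toNat + 1 := by omega
      have he2 : (d-m).toNat ≤ (d-b).toNat := by omega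
      calc mw b d + wsum (M.erase b) d
          ≤ 2 * (2:ℝ)⁻¹ ^ (d - b).toNat + 4 * (2:ℝ)⁻¹ ^ ((d-b).toNat + 1) := by
            rw [h1, ← he1]; linarith [hrec]
        _ = 4 * (2:ℝ)⁻¹ ^ (d - b).toNat := by ring
        _ ≤ 4 * (2:ℝ)⁻¹ ^ (d - m).toNat := by
            have := half_pow_mono he2; linarith

set_option maxHeartbeats 2000000 in
/-- The key combinatorial lemma. -/
theorem key : ∀ (k r : ℕ) (M : Multiset ℤ) (d D : ℤ) (W : ℝ),
    M.card = k →
    (∀ a ∈ M, 0 ≤ a ∧ a ≤ D) →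
    0 ≤ W → W ≤ 4/15 →
    (∀ i : ℤ, 0 ≤ i → i ≤ d → 1 ≤ wsum M i + W * (2:ℝ)⁻¹ ^ (d - i).toNat) →
    0 ≤ d → d ≤ D →
    (k * (D.toNat * D.toNat) + 1) - msq M = r →
    d + 2 ≤ 4 * (k:ℤ) := by
  intro k
  induction k using Nat.strong_induction_on with
  | _ k IHk =>
  intro r
  induction r using Nat.strong_induction_on with
  | _ r IHr =>
  intro M d D W hcard hbox hW0 hW15 hcov hd0 hdD hrank
  rcases Nat.eq_zero_or_pos k with hk0 | hkpos
  · exfalso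
    have hM0 : M = 0 := Multiset.card_eq_zero.mp (by rw [hcard, hk0])
    have h := hcov 0 le_rfl hd0
    rw [hM0, wsum_zero, zero_add] at h
    have h1 : W * (2:ℝ)⁻¹ ^ (d - 0).toNat ≤ W := by
      nlinarith [half_pow_le_one (d - 0).toNat, half_pow_pos (d-0).toNat]
    linarith
  have hMne : M ≠ 0 := by
    intro h; rw [h] at hcard; simp at hcard; omega
  by_cases hpile : ∃ p : ℤ, p ≤ d - 2 ∧ 2 ≤ M.count p
  · -- spreading step
    obtain ⟨p, hpd, hpc⟩ := hpile
    have hpM : p ∈ M := by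
      rw [← Multiset.count_pos]; omega
    have hp0 : 0 ≤ p := (hbox p hpM).1
    obtain ⟨R, hMR⟩ : ∃ R, M = p ::ₘ p ::ₘ R := by
      have hrep : Multiset.replicate 2 p ≤ M := Multiset.le_count_iff_replicate_le.mp hpc
      refine ⟨M - Multiset.replicate 2 p, ?_⟩
      have h1 : (M - Multiset.replicate 2 p) + Multiset.replicate 2 p = M :=
        tsub_add_cancel_of_le hrep
      conv_lhs => rw [← h1]
      rw [add_comm]
      simp [Multiset.replicate_succ]
    set q : ℤ := max (p-1) 0 with hq
    have hq0 : 0 ≤ q := by omega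
    set M' : Multiset ℤ := (p+1) ::ₘ q ::ₘ R with hM'
    have hcard' : M'.card = k := by
      rw [hM', Multiset.card_cons, Multiset.card_cons]
      rw [hMR, Multiset.card_cons, Multiset.card_cons] at hcard
      omega
    have hboxR : ∀ a ∈ R, 0 ≤ a ∧ a ≤ D := by
      intro a ha
      exact hbox a (by rw [hMR]; exact Multiset.mem_cons_of_mem (Multiset.mem_cons_of_mem ha))
    have hpD : p ≤ D := (hbox p hpM).2
    have hpd2 : p + 1 ≤ D := by
      have : p + 1 ≤ d - 1 := by omega
      omega
    have hbox' : ∀ a ∈ M', 0 ≤ a ∧ a ≤ D := by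
      intro a ha
      rw [hM'] at ha
      rcases Multiset.mem_cons.mp ha with rfl | ha
      · exact ⟨by omega, hpd2⟩
      rcases Multiset.mem_cons.mp ha with rfl | ha
      · exact ⟨hq0, by omega⟩
      · exact hboxR a ha
    have hcov' : ∀ i : ℤ, 0 ≤ i → i ≤ d →
        1 ≤ wsum M' i + W * (2:ℝ)⁻¹ ^ (d - i).toNat := by
      intro i hi0 hid
      have hsplit' : wsum M' i = mw (p+1) i + (mw q i + wsum R i) := by
        rw [hM', wsum_cons, wsum_cons]
      rcases eq_or_ne i p with hip | hip
      · have h1 : mw (p+1) i = 1 := by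
          rw [mw_eq_of_ge (by omega)]
          have hone : (p + 1 - i).toNat = 1 := by omega
          rw [hone]; norm_num
        rw [hsplit', h1]
        have h2 := mw_nonneg q i
        have hWp : 0 ≤ W * (2:ℝ)⁻¹ ^ (d - i).toNat := by positivity
        linarith [wsum_nonneg R i]
      · have hold := hcov i hi0 hid
        have hsplit : wsum M i = mw p i + (mw p i + wsum R i) := by
          rw [hMR, wsum_cons, wsum_cons]
        rw [hsplit] at hold
        have hkey : mw p i + mw p i ≤ mw (p+1) i + mw q i := by
          rcases lt_or_gt_of_ne hip with hlt | hgt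
          · have hp1 : 1 ≤ p := by omega
            have hqe : q = p - 1 := by rw [hq]; omega
            have e1 : mw p i = 2 * (2:ℝ)⁻¹ ^ ((p - 1 - i).toNat + 1) := by
              rw [mw_eq_of_ge (by omega)]
              congr 2; omega
            have e2 : mw q i = 2 * (2:ℝ)⁻¹ ^ (p - 1 - i).toNat := by
              rw [hqe, mw_eq_of_ge (by omega)]
            have h3 := mw_nonneg (p+1) i
            rw [e1, e2, pow_succ]
            nlinarith [half_pow_pos (p-1-i).toNat]
          · have e1 : mw p i = 2 * (2:ℝ)⁻¹ ^ ((i - (p+1)).toNat + 1) := by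
              rw [mw_eq_of_le (by omega)]
              congr 2; omega
            have e2 : mw (p+1) i = 2 * (2:ℝ)⁻¹ ^ (i - (p+1)).toNat := by
              rw [mw_eq_of_le (by omega)]
            have h3 := mw_nonneg q i
            rw [e1, e2, pow_succ]
            nlinarith [half_pow_pos (i - (p+1)).toNat]
        rw [hsplit']
        linarith
    have hμM : msq M = p.toNat * p.toNat + (p.toNat * p.toNat + msq R) := by
      rw [hMR, msq_cons, msq_cons]
    have hμM' : msq M' = (p+1).toNat * (p+1).toNat + (q.toNat * q.toNat + msq R) := by
      rw [hM', msq_cons, msq_cons]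
    have hμlt : msq M < msq M' := by
      rw [hμM, hμM']
      have hincr : p.toNat * p.toNat + p.toNat * p.toNat
          < (p+1).toNat * (p+1).toNat + q.toNat * q.toNat := by
        rcases eq_or_lt_of_le hp0 with hp00 | hp1
        · have hp00' : p = 0 := hp00.symm
          subst hp00'
          simp [hq]
        · have hqe : q = p - 1 := by rw [hq]; omega
          obtain ⟨s, hs⟩ : ∃ s : ℕ, p.toNat = s + 1 := ⟨p.toNat - 1, by omega⟩
          have h1 : (p+1).toNat = s + 2 := by omega
          have h2 : q.toNat = s := by rw [hqe]; omega
          rw [h1, h2, hs]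
          nlinarith
      omega
    have hμbound : msq M ≤ k * (D.toNat * D.toNat) := by
      have hmem : ∀ x ∈ M.map (fun a => a.toNat * a.toNat), x ≤ D.toNat * D.toNat := by
        intro x hx
        obtain ⟨a, haM, rfl⟩ := Multiset.mem_map.mp hx
        have h1 := (hbox a haM).1
        have h2 := (hbox a haM).2
        have : a.toNat ≤ D.toNat := by omega
        exact Nat.mul_le_mul this this
      have := Multiset.sum_le_card_nsmul (M.map (fun a => a.toNat * a.toNat))
        (D.toNat * D.toNat) hmem
      rw [Multiset.card_map, hcard, smul_eq_mul] at this
      exact this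
    have hrlt : (k * (D.toNat * D.toNat) + 1) - msq M' < r := by
      rw [← hrank]
      omega
    exact IHr _ hrlt M' d D W hcard' hbox' hW0 hW15 hcov' hd0 hdD rfl
  · -- tame case
    push_neg at hpile
    have htame : ∀ p : ℤ, p ≤ d - 2 → M.count p ≤ 1 := by
      intro p hp
      have := hpile p hp
      omega
    obtain ⟨x, hxM⟩ := Multiset.exists_mem_of_ne_zero hMne
    have hne : M.toFinset.Nonempty := ⟨x, Multiset.mem_toFinset.mpr hxM⟩
    set b₁ := M.toFinset.max' hne with hb1
    have hb1M : b₁ ∈ M := Multiset.mem_toFinset.mp (M.toFinset.max'_mem hne)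
    have hb1max : ∀ a ∈ M, a ≤ b₁ := fun a ha =>
      M.toFinset.le_max' a (Multiset.mem_toFinset.mpr ha)
    have hb10 : 0 ≤ b₁ := (hbox b₁ hb1M).1
    by_cases hA : d - 1 ≤ b₁
    · -- Case A
      by_cases hd4 : 4 ≤ d
      · obtain ⟨R, hME⟩ : ∃ R, M = b₁ ::ₘ R ∧ R = M.erase b₁ :=
          ⟨M.erase b₁, (Multiset.cons_erase hb1M).symm, rfl⟩
        obtain ⟨hME, hRdef⟩ := hME
        set W' : ℝ := 2 * (2:ℝ)⁻¹ ^ (b₁ - (d-4)).toNat + W * (2:ℝ)⁻¹ ^ (4:ℕ) with hW'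
        have hW'0 : 0 ≤ W' := by rw [hW']; positivity
        have hW'15 : W' ≤ 4/15 := by
          rw [hW']
          have h3 : (3:ℕ) ≤ (b₁ - (d-4)).toNat := by omega
          have h4 := half_pow_mono h3
          have hp4 : ((2:ℝ)⁻¹)^(4:ℕ) = 1/16 := by norm_num
          have hp3 : ((2:ℝ)⁻¹)^(3:ℕ) = 1/8 := by norm_num
          rw [hp4]
          nlinarith
        have hcov' : ∀ i : ℤ, 0 ≤ i → i ≤ d - 4 →
            1 ≤ wsum R i + W' * (2:ℝ)⁻¹ ^ ((d-4) - i).toNat := by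
          intro i hi0 hid
          have hold := hcov i hi0 (by omega)
          rw [hME, wsum_cons] at hold
          have e1 : mw b₁ i = (2 * (2:ℝ)⁻¹ ^ (b₁ - (d-4)).toNat) * (2:ℝ)⁻¹ ^ ((d-4) - i).toNat :=
            absorb_mass (by omega) (by omega)
          have e2 : W * (2:ℝ)⁻¹ ^ (d - i).toNat
              = (W * (2:ℝ)⁻¹ ^ (4:ℕ)) * (2:ℝ)⁻¹ ^ ((d-4) - i).toNat := by
            have h := absorb_ph (d := d) (d' := d - 4) (i := i) (by omega) (by omega) W
            rw [h]
            have : (d - (d-4)).toNat = 4 := by omega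
            rw [this]
          have e3 : W' * (2:ℝ)⁻¹ ^ ((d-4) - i).toNat
              = (2 * (2:ℝ)⁻¹ ^ (b₁ - (d-4)).toNat) * (2:ℝ)⁻¹ ^ ((d-4) - i).toNat
                + (W * (2:ℝ)⁻¹ ^ (4:ℕ)) * (2:ℝ)⁻¹ ^ ((d-4) - i).toNat := by
            rw [hW']; ring
          rw [e3, ← e1, ← e2]
          linarith
        have hcardR : R.card = k - 1 := by
          rw [hRdef, Multiset.card_erase_of_mem hb1M, hcard]; rfl
        have hboxR : ∀ a ∈ R, 0 ≤ a ∧ a ≤ D := by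
          intro a ha
          exact hbox a (by rw [hME]; exact Multiset.mem_cons_of_mem ha)
        have hrec := IHk (k-1) (by omega) ((k-1) * (D.toNat * D.toNat) + 1 - msq R)
          R (d-4) D W' hcardR hboxR hW'0 hW'15 hcov' (by omega) (by omega) rfl
        have hcast : ((k-1:ℕ):ℤ) = (k:ℤ) - 1 := by omega
        rw [hcast] at hrec
        linarith
      · push_neg at hd4
        rcases Nat.lt_or_ge k 2 with hk2 | hk2
        · have hk1 : k = 1 := by omega
          by_cases hd3 : d ≤ 2
          · rw [hk1]; push_cast; omega
          · exfalso
            have hd3' : d = 3 := by omega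
            have hM1 : M = {b₁} := by
              obtain ⟨a, ha⟩ := Multiset.card_eq_one.mp (by rw [hcard, hk1])
              rw [ha] at hb1M ⊢
              simp at hb1M
              rw [hb1M]
            have h := hcov 0 le_rfl hd0
            have hw1 : wsum M 0 = mw b₁ 0 := by
              rw [hM1]
              show wsum (b₁ ::ₘ 0) 0 = mw b₁ 0
              rw [wsum_cons, wsum_zero, add_zero]
            rw [hw1] at h
            have e1 : mw b₁ 0 = 2 * (2:ℝ)⁻¹ ^ (b₁ - 0).toNat := mw_eq_of_ge (by omega)
            have e2 : (2:ℕ) ≤ (b₁ - 0).toNat := by omega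
            have e3 := half_pow_mono e2
            have e4 : W * (2:ℝ)⁻¹ ^ (d - 0).toNat ≤ W := by
              nlinarith [half_pow_le_one (d-0).toNat]
            rw [e1] at h
            have e5 : ((2:ℝ)⁻¹)^(2:ℕ) = 1/4 := by norm_num
            nlinarith
        · have hc : (2:ℤ) ≤ (k:ℤ) := by exact_mod_cast hk2
          omega
    · -- Case B
      push_neg at hA
      have hball : ∀ a ∈ M, a ≤ d - 2 := by
        intro a ha; have := hb1max a ha; omega
      have hnd : M.Nodup := by
        rw [Multiset.nodup_iff_count_le_one]
        intro a
        by_cases haM : a ∈ M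
        · exact htame a (hball a haM)
        · rw [Multiset.count_eq_zero_of_notMem haM]; omega
      have hWd : W * (2:ℝ)⁻¹ ^ (d - d).toNat = W := by
        simp
      have h2M : (d - 2) ∈ M := by
        by_contra h2M
        have hb3 : ∀ a ∈ M, a ≤ d - 3 := by
          intro a ha
          have h1 := hball a ha
          have : a ≠ d - 2 := fun h => h2M (h ▸ ha)
          omega
        have hgeo := geom_bound k M hcard hnd (d-3) d (by omega) hb3
        have h := hcov d hd0 le_rfl
        rw [hWd] at h
        have e1 : ((d:ℤ) - (d-3)).toNat = 3 := by omega
        rw [e1] at hgeo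
        have e2 : ((2:ℝ)⁻¹)^(3:ℕ) = 1/8 := by norm_num
        nlinarith
      have hM1E : M = (d-2) ::ₘ M.erase (d-2) := (Multiset.cons_erase h2M).symm
      have hnd1 : (M.erase (d-2)).Nodup := hnd.erase _
      have hM1b : ∀ a ∈ M.erase (d-2), a ≤ d - 3 := by
        intro a ha
        have haM : a ∈ M := Multiset.mem_of_mem_erase ha
        have : a ≠ d - 2 := by
          intro h; subst h
          exact (Multiset.Nodup.notMem_erase hnd) ha
        have := hball a haM
        omega
      have hcard1 : (M.erase (d-2)).card = k - 1 := by
        rw [Multiset.card_erase_of_mem h2M, hcard]; rfl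
      have h34 : (d-3) ∈ M.erase (d-2) ∨ (d-4) ∈ M.erase (d-2) := by
        by_contra h34
        push_neg at h34
        have hb5 : ∀ a ∈ M.erase (d-2), a ≤ d - 5 := by
          intro a ha
          have h1 := hM1b a ha
          have h3 : a ≠ d - 3 := fun h => h34.1 (h ▸ ha)
          have h4 : a ≠ d - 4 := fun h => h34.2 (h ▸ ha)
          omega
        have hgeo := geom_bound (k-1) _ hcard1 hnd1 (d-5) d (by omega) hb5
        have h := hcov d hd0 le_rfl
        rw [hM1E, wsum_cons, hWd] at h
        have e1 : mw (d-2) d = 2 * (2:ℝ)⁻¹ ^ (2:ℕ) := by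
          rw [mw_eq_of_le (by omega)]
          congr 2; omega
        have e5 : ((d:ℤ) - (d-5)).toNat = 5 := by omega
        rw [e5] at hgeo
        rw [e1] at h
        have p2 : ((2:ℝ)⁻¹)^(2:ℕ) = 1/4 := by norm_num
        have p5 : ((2:ℝ)⁻¹)^(5:ℕ) = 1/32 := by norm_num
        nlinarith
      obtain ⟨b₂, hb2M1, hb2val⟩ : ∃ b₂, b₂ ∈ M.erase (d-2) ∧ (b₂ = d-3 ∨ b₂ = d-4) := by
        rcases h34 with h | h
        · exact ⟨d-3, h, Or.inl rfl⟩
        · exact ⟨d-4, h, Or.inr rfl⟩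
      obtain ⟨M₂, hM2E⟩ : ∃ M₂, M.erase (d-2) = b₂ ::ₘ M₂ ∧ M₂ = (M.erase (d-2)).erase b₂ :=
        ⟨(M.erase (d-2)).erase b₂, (Multiset.cons_erase hb2M1).symm, rfl⟩
      obtain ⟨hM2E, hM2def⟩ := hM2E
      have hMfull : M = (d-2) ::ₘ b₂ ::ₘ M₂ := by rw [hM1E, hM2E]
      have hcard2 : M₂.card + 2 = k := by
        have h1 : (M.erase (d-2)).card = M₂.card + 1 := by
          rw [hM2E, Multiset.card_cons]
        omega
      have hk2 : 2 ≤ k := by omega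
      by_cases hd8 : 8 ≤ d
      · set W'' : ℝ := 2 * (2:ℝ)⁻¹ ^ ((d-2) - (d-8)).toNat + 2 * (2:ℝ)⁻¹ ^ (b₂ - (d-8)).toNat
            + W * (2:ℝ)⁻¹ ^ (8:ℕ) with hW''
        have hW''0 : 0 ≤ W'' := by rw [hW'']; positivity
        have hW''15 : W'' ≤ 4/15 := by
          rw [hW'']
          have e6 : ((d:ℤ)-2 - (d-8)).toNat = 6 := by omega
          have h4 : (4:ℕ) ≤ (b₂ - (d-8)).toNat := by
            rcases hb2val with h | h <;> omega
          have h5 := half_pow_mono h4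
          have p6 : ((2:ℝ)⁻¹)^(6:ℕ) = 1/64 := by norm_num
          have p8 : ((2:ℝ)⁻¹)^(8:ℕ) = 1/256 := by norm_num
          have p4 : ((2:ℝ)⁻¹)^(4:ℕ) = 1/16 := by norm_num
          rw [e6, p6, p8]
          nlinarith
        have hb2lb : d - 8 ≤ b₂ := by rcases hb2val with h | h <;> omega
        have hcov' : ∀ i : ℤ, 0 ≤ i → i ≤ d - 8 →
            1 ≤ wsum M₂ i + W'' * (2:ℝ)⁻¹ ^ ((d-8) - i).toNat := by
          intro i hi0 hid
          have hold := hcov i hi0 (by omega)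
          rw [hMfull, wsum_cons, wsum_cons] at hold
          have e1 : mw (d-2) i
              = (2 * (2:ℝ)⁻¹ ^ ((d-2) - (d-8)).toNat) * (2:ℝ)⁻¹ ^ ((d-8) - i).toNat :=
            absorb_mass (by omega) (by omega)
          have e2 : mw b₂ i = (2 * (2:ℝ)⁻¹ ^ (b₂ - (d-8)).toNat) * (2:ℝ)⁻¹ ^ ((d-8) - i).toNat :=
            absorb_mass (by omega) hb2lb
          have e3 : W * (2:ℝ)⁻¹ ^ (d - i).toNat
              = (W * (2:ℝ)⁻¹ ^ (8:ℕ)) * (2:ℝ)⁻¹ ^ ((d-8) - i).toNat := by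
            have h := absorb_ph (d := d) (d' := d - 8) (i := i) (by omega) (by omega) W
            rw [h]
            have : (d - (d-8)).toNat = 8 := by omega
            rw [this]
          have e4 : W'' * (2:ℝ)⁻¹ ^ ((d-8) - i).toNat
              = (2 * (2:ℝ)⁻¹ ^ ((d-2) - (d-8)).toNat) * (2:ℝ)⁻¹ ^ ((d-8) - i).toNat
                + (2 * (2:ℝ)⁻¹ ^ (b₂ - (d-8)).toNat) * (2:ℝ)⁻¹ ^ ((d-8) - i).toNat
                + (W * (2:ℝ)⁻¹ ^ (8:ℕ)) * (2:ℝ)⁻¹ ^ ((d-8) - i).toNat := by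
            rw [hW'']; ring
          rw [e4, ← e1, ← e2, ← e3]
          linarith
        have hcard2' : M₂.card = k - 2 := by omega
        have hbox2 : ∀ a ∈ M₂, 0 ≤ a ∧ a ≤ D := by
          intro a ha
          refine hbox a ?_
          rw [hMfull]
          exact Multiset.mem_cons_of_mem (Multiset.mem_cons_of_mem ha)
        have hrec := IHk (k-2) (by omega)
          ((k-2) * (D.toNat * D.toNat) + 1 - msq M₂)
          M₂ (d-8) D W'' hcard2' hbox2 hW''0 hW''15 hcov' (by omega) (by omega) rfl
        have hcast : ((k-2:ℕ):ℤ) = (k:ℤ) - 2 := by omega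
        rw [hcast] at hrec
        linarith
      · push_neg at hd8
        rcases Nat.lt_or_ge k 3 with hk3 | hk3
        · have hk2' : k = 2 := by omega
          by_cases hd6 : d ≤ 6
          · rw [hk2']; push_cast; omega
          · exfalso
            have hd7 : d = 7 := by omega
            have hM20 : M₂ = 0 := Multiset.card_eq_zero.mp (by omega)
            have h := hcov 0 le_rfl hd0
            rw [hMfull, hM20, wsum_cons, wsum_cons, wsum_zero, add_zero] at h
            have e1 : mw (d-2) 0 = 2 * (2:ℝ)⁻¹ ^ (5:ℕ) := by
              rw [mw_eq_of_ge (by omega)]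
              congr 2; omega
            have e2 : mw b₂ 0 = 2 * (2:ℝ)⁻¹ ^ (b₂ - 0).toNat := mw_eq_of_ge (by omega)
            have e2' : (3:ℕ) ≤ (b₂ - 0).toNat := by rcases hb2val with h' | h' <;> omega
            have e3 := half_pow_mono e2'
            have e4 : W * (2:ℝ)⁻¹ ^ (d - 0).toNat ≤ W := by
              nlinarith [half_pow_le_one (d-0).toNat]
            rw [e1, e2] at h
            have p5 : ((2:ℝ)⁻¹)^(5:ℕ) = 1/32 := by norm_num
            have p3 : ((2:ℝ)⁻¹)^(3:ℕ) = 1/8 := by norm_num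
            nlinarith
        · have hc : (3:ℤ) ≤ (k:ℤ) := by exact_mod_cast hk3
          omega

lemma half_pow_mono' {m n : ℕ} (h : m ≤ n) : ((2:ℝ)⁻¹) ^ n ≤ ((2:ℝ)⁻¹) ^ m :=
  pow_le_pow_of_le_one (by norm_num) (by norm_num) h

lemma dist_getVert_le {V : Type*} {G : SimpleGraph V} (hG : G.Connected) {x y : V}
    (p : G.Walk x y) : ∀ i : ℕ, i ≤ p.length → G.dist x (p.getVert i) ≤ i := by
  intro i
  induction i with
  | zero => intro _; simp [p.getVert_zero]
  | succ n ih =>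
    intro hn
    have h1 := ih (by omega)
    have hadj : G.Adj (p.getVert n) (p.getVert (n+1)) := p.adj_getVert_succ (by omega)
    have h2 : G.dist (p.getVert n) (p.getVert (n+1)) = 1 :=
      SimpleGraph.dist_eq_one_iff_adj.mpr hadj
    have h3 := hG.dist_triangle (u := x) (v := p.getVert n) (w := p.getVert (n+1))
    omega

theorem graph_bound {V : Type*} [Fintype V] (G : SimpleGraph V) (hG : G.Connected)
    (S : Finset V) (hS : IsPorousExpDomSet G S) :
    (G.diam : ℤ) + 2 ≤ 4 * (S.card : ℤ) := by
  have hne : Nonempty V := hG.nonempty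
  obtain ⟨x, y, hxy⟩ := G.exists_edist_eq_ediam_of_finite
  have hreach : ∀ u v : V, G.Reachable u v := fun u v => hG.preconnected u v
  have hedist_ne : G.edist x y ≠ ⊤ := by
    rw [SimpleGraph.edist_ne_top_iff_reachable]; exact hreach x y
  have hediam_ne : G.ediam ≠ ⊤ := by rw [← hxy]; exact hedist_ne
  have hdist : G.dist x y = G.diam := by
    rw [SimpleGraph.dist, SimpleGraph.diam, hxy]
  obtain ⟨p, hp⟩ := hG.exists_walk_length_eq_dist x y
  have hplen : p.length = G.diam := by rw [hp, hdist]
  have hd1 : ∀ i : ℕ, i ≤ p.length → G.dist x (p.getVert i) ≤ i :=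
    dist_getVert_le hG p
  have hd2 : ∀ i : ℕ, i ≤ p.length → G.dist (p.getVert i) y ≤ p.length - i := by
    intro i hi
    have h1 := dist_getVert_le hG p.reverse (p.length - i)
      (by rw [SimpleGraph.Walk.length_reverse]; omega)
    have hrev : p.reverse.getVert (p.length - i) = p.getVert i := by
      rw [SimpleGraph.Walk.getVert_reverse]
      congr 1
      omega
    rw [hrev] at h1
    rw [SimpleGraph.dist_comm]
    exact h1
  have hvert : ∀ i : ℕ, i ≤ p.length → G.dist x (p.getVert i) = i := by
    intro i hi
    have h1 := hd1 i hi
    have h2 := hd2 i hi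
    have h3 := hG.dist_triangle (u := x) (v := p.getVert i) (w := y)
    have h4 : G.dist x y = p.length := hp.symm
    omega
  -- the masses
  set M : Multiset ℤ := S.val.map (fun u => (G.dist u x : ℤ)) with hM
  have hcard : M.card = S.card := by rw [hM, Multiset.card_map]; rfl
  have hbox : ∀ a ∈ M, 0 ≤ a ∧ a ≤ (G.diam : ℤ) := by
    intro a ha
    rw [hM] at ha
    obtain ⟨u, _, rfl⟩ := Multiset.mem_map.mp ha
    constructor
    · positivity
    · exact_mod_cast G.dist_le_diam hediam_ne
  have hcov : ∀ i : ℤ, 0 ≤ i → i ≤ (G.diam : ℤ) →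
      1 ≤ wsum M i + 0 * (2:ℝ)⁻¹ ^ ((G.diam : ℤ) - i).toNat := by
    intro i hi0 hid
    rw [zero_mul, add_zero]
    set v := p.getVert i.toNat with hv
    have hile : i.toNat ≤ p.length := by omega
    have hvd : G.dist x v = i.toNat := hvert i.toNat hile
    have h1 := hS v
    have h2 : expWeight G S v = (S.val.map (fun u => 2 * (2:ℝ)⁻¹ ^ G.dist u v)).sum := by
      rw [expWeight]
      rw [Finset.sum]
      congr 1
      apply Multiset.map_congr rfl
      intro u hu
      rw [if_pos (hreach u v)]
    have h3 : (S.val.map (fun u => 2 * (2:ℝ)⁻¹ ^ G.dist u v)).sum ≤ wsum M i := by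
      rw [hM, wsum]
      rw [Multiset.map_map]
      apply Multiset.sum_map_le_sum_map
      intro u hu
      simp only [Function.comp_apply]
      unfold mw
      have t1 := hG.dist_triangle (u := x) (v := u) (w := v)
      have t2 := hG.dist_triangle (u := u) (v := v) (w := x)
      have t3 : G.dist v x = G.dist x v := SimpleGraph.dist_comm ..
      have t4 : G.dist x u = G.dist u x := SimpleGraph.dist_comm ..
      have hnatabs : (i - (G.dist u x : ℤ)).natAbs ≤ G.dist u v := by
        have hvd' : (G.dist x v : ℤ) = i := by omega
        omega
      have := half_pow_mono' hnatabs
      nlinarith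
    linarith
  have := key S.card _ M (G.diam : ℤ) (G.diam : ℤ) 0 hcard hbox le_rfl (by norm_num)
    hcov (by positivity) le_rfl rfl
  linarith

theorem stmt17 {V : Type*} [Fintype V] (G : SimpleGraph V) (hG : G.Connected) :
    (⌈((G.diam : ℚ) + 2) / 4⌉.toNat : ℕ∞) ≤ porousExpDomNum G := by
  rw [porousExpDomNum]
  apply le_sInf
  rintro n ⟨S, hS, rfl⟩
  rw [Nat.cast_le]
  have hb := graph_bound G hG S hS
  rw [Int.toNat_le, Int.ceil_le]
  rw [div_le_iff₀ (by norm_num)]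
  have h2 : ((G.diam : ℤ):ℚ) + 2 ≤ 4*((S.card:ℤ):ℚ) := by exact_mod_cast hb
  push_cast at h2 ⊢
  linarith
end

section
/- For every k ≥ 1, the diameters of the Apollonian networks satisfy diam(G_{k+3}) = diam(G_k) + 2. -/
/-- A family of Apollonian networks, given by a vertex set `Vert` together with a
generation labeling `gen` and an adjacency relation `adj`, satisfying the recursive
construction: the first generation `U₁` consists of three pairwise adjacent vertices
(forming `G₁`); and for each `k ≥ 1`, for each vertex `u` of generation `k` and each
adjacent pair `{x, y}` of neighbors of `u` in `G_k`, exactly one new vertex of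
generation `k + 1` is created, adjacent to exactly `u`, `x`, and `y`.
The `k`-th Apollonian network `G_k` is the induced subgraph on the vertices of
generation at most `k`. -/
structure ApollonianNetwork where
  Vert : Type
  adj : Vert → Vert → Prop
  adj_symm : ∀ a b, adj a b → adj b a
  adj_irrefl : ∀ a, ¬ adj a a
  gen : Vert → ℕ
  gen_pos : ∀ v, 1 ≤ gen v
  /-- The first generation consists of exactly three vertices. -/
  U1_card : ∃ a b c : Vert, a ≠ b ∧ a ≠ c ∧ b ≠ c ∧ {v | gen v = 1} = {a, b, c}
  /-- `G₁` is a complete graph on the first generation. -/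
  U1_complete : ∀ a b, gen a = 1 → gen b = 1 → a ≠ b → adj a b
  /-- All edges join vertices of distinct generations, except within generation 1. -/
  adj_gen : ∀ a b, adj a b → gen a = gen b → gen a = 1
  /-- Every vertex `v` of generation `k ≥ 2` is adjacent, among the vertices of earlier
  generations, to exactly three vertices `u`, `x`, `y`, where `u` has generation `k - 1`
  and `x`, `y` are neighbors of `u` in `G_{k-1}` that are adjacent to each other. -/
  created : ∀ v, 2 ≤ gen v → ∃ u x y,
    gen u = gen v - 1 ∧ gen x ≤ gen v - 1 ∧ gen y ≤ gen v - 1 ∧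
    adj u x ∧ adj u y ∧ adj x y ∧
    {w | adj v w ∧ gen w < gen v} = {u, x, y}
  /-- For each `k ≥ 1`, each vertex `u` of generation `k`, and each adjacent pair
  `{x, y}` of neighbors of `u` in `G_k`, there is exactly one vertex of generation
  `k + 1` whose neighbors in `G_{k+1}` are exactly `u`, `x`, and `y`. -/
  attach : ∀ k, 1 ≤ k → ∀ u x y,
    gen u = k → gen x ≤ k → gen y ≤ k → x ≠ y →
    adj u x → adj u y → adj x y →
    ∃! v, gen v = k + 1 ∧ {w | adj v w ∧ gen w ≤ k} = ({u, x, y} : Set Vert)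

/-- The `k`-th Apollonian network `G_k`: the induced subgraph on the vertices of
generation at most `k`. -/
def ApollonianNetwork.G (A : ApollonianNetwork) (k : ℕ) :
    SimpleGraph {v : A.Vert // A.gen v ≤ k} where
  Adj a b := A.adj a b
  symm := ⟨fun a b h => A.adj_symm a b h⟩
  loopless := ⟨fun a h => A.adj_irrefl a h⟩

/-!
Two facts about the whole network drive the proof. The lower neighbours of a vertex of
generation `≥ 2` are pairwise adjacent, so a walk can be short-cut at a vertex of maximal
generation: geodesics between vertices of `G n` stay in `G n`, and a geodesic from `v` to a
vertex of no larger generation starts with a step down. Adjacent vertices not both in `U₁`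
have distinct generations, so one of the three lower neighbours of a vertex of generation `g`
lies in `U₁` or has generation `≤ g - 3`; every vertex of `G (k + 3)` is therefore adjacent to
a vertex of `G k`, which gives `diam G (k + 3) ≤ diam G k + 2`.

Conversely, let `a, b ∈ G k` be at distance `D = diam G k ≥ 2`. Over `a` there is a vertex `v`
of generation `k + 3` whose lower neighbours are `a` and vertices above `G k` that hug `a`; a
vertex hugging `a` is never closer than `a` to a vertex of no larger generation. Stepping down
from `v` and from the analogous `w` over `b` costs two steps, after which at least `D` remain.
If `D ≤ 1`, two explicit vertices of generation 4 at distance 3 suffice.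
-/

namespace SimpleGraph

variable {V : Type*} {G : SimpleGraph V}

theorem Walk.exists_length_lt_of_isClique {u v z : V} (p : G.Walk u v) (hz : z ∈ p.support)
    (hzu : z ≠ u) (hzv : z ≠ v) (hc : G.IsClique {x | G.Adj z x ∧ x ∈ p.support}) :
    ∃ q : G.Walk u v, q.length < p.length := by
  obtain ⟨q, r, rfl⟩ := Walk.mem_support_iff_exists_append.1 hz
  cases r with
  | nil => exact absurd rfl hzv
  | @cons _ y _ hzy r =>
    obtain ⟨x, q', hxz, rfl⟩ :
        ∃ (x : V) (q' : G.Walk u x) (hxz : G.Adj x z), q = q'.concat hxz := by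
      cases q with
      | nil => exact absurd rfl hzu
      | cons h q => exact Walk.exists_cons_eq_concat h q
    by_cases hxy : x = y
    · subst hxy
      exact ⟨q'.append r, by simp; omega⟩
    · have hxy' : G.Adj x y := hc (by simp [hxz.symm]) (by simp [hzy]) hxy
      exact ⟨q'.append (.cons hxy' r), by simp⟩

theorem induce_edist_eq_of_walk {s : Set V} {u v : s} (p : G.Walk u v)
    (hp : p.length = G.dist u v) (hs : ∀ x ∈ p.support, x ∈ s) :
    (G.induce s).edist u v = G.edist u v := by
  have hlen : (p.induce s hs).length = p.length := by
    rw [← Walk.length_map (Embedding.induce s).toHom, Walk.map_induce]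
    rfl
  apply le_antisymm
  · calc (G.induce s).edist u v ≤ (p.induce s hs).length := edist_le _
      _ = G.edist u v := by rw [hlen, hp, Reachable.coe_dist_eq_edist ⟨p⟩]
  · obtain ⟨q, hq⟩ := Reachable.exists_walk_length_eq_edist ⟨p.induce s hs⟩
    calc G.edist u v ≤ (q.map (Embedding.induce s).toHom).length := edist_le _
      _ = (G.induce s).edist u v := by rw [Walk.length_map, hq]

theorem diam_le_of_forall_dist_le {n : ℕ} (h : ∀ u v, G.dist u v ≤ n) : G.diam ≤ n := by
  cases isEmpty_or_nonempty V
  · simp [diam, ediam_eq_zero_of_subsingleton]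
  · obtain ⟨u, v, huv⟩ := G.exists_dist_eq_diam
    exact huv ▸ h u v

end SimpleGraph

namespace ApollonianNetwork

def graph (A : ApollonianNetwork) : SimpleGraph A.Vert where
  Adj := A.adj
  symm := ⟨A.adj_symm⟩
  loopless := ⟨A.adj_irrefl⟩

def lower (A : ApollonianNetwork) (v : A.Vert) : Set A.Vert :=
  {w | A.adj v w ∧ A.gen w < A.gen v}

def closedNbhd (A : ApollonianNetwork) (a : A.Vert) : Set A.Vert :=
  insert a {t | A.adj a t}

def Hugs (A : ApollonianNetwork) (a v : A.Vert) : Prop :=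
  a ∈ A.lower v ∧ A.lower v ⊆ A.closedNbhd a

def Screens (A : ApollonianNetwork) (k : ℕ) (a σ : A.Vert) : Prop :=
  σ = a ∨ (k < A.gen σ ∧ A.Hugs a σ)

variable {A : ApollonianNetwork} {a b u v w x y z σ τ : A.Vert} {k n : ℕ}

theorem ne_of_adj (h : A.adj u v) : u ≠ v := by
  rintro rfl
  exact A.adj_irrefl u h

theorem gen_lt_of_adj (h : A.adj v w) (hle : A.gen w ≤ A.gen v) (hv : 2 ≤ A.gen v) :
    A.gen w < A.gen v := by
  refine lt_of_le_of_ne hle fun heq => ?_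
  have := A.adj_gen v w h heq.symm
  omega

theorem two_le_gen_of_mem_lower (h : a ∈ A.lower v) : 2 ≤ A.gen v := by
  have := A.gen_pos a
  have := h.2
  omega

theorem adj_of_lower_eq (h : A.lower v = {u, x, y}) : A.adj v u ∧ A.adj v x ∧ A.adj v y := by
  have hmem : u ∈ A.lower v ∧ x ∈ A.lower v ∧ y ∈ A.lower v := by simp [h]
  exact ⟨hmem.1.1, hmem.2.1.1, hmem.2.2.1⟩

theorem isClique_lower (hv : 2 ≤ A.gen v) : A.graph.IsClique (A.lower v) := by
  obtain ⟨u, x, y, -, -, -, hux, huy, hxy, hlower⟩ := A.created v hv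
  change A.lower v = {u, x, y} at hlower
  rw [hlower, SimpleGraph.isClique_insert, SimpleGraph.isClique_pair]
  simp only [Set.mem_insert_iff, Set.mem_singleton_iff, forall_eq_or_imp, forall_eq]
  exact ⟨fun _ => hxy, fun _ => hux, fun _ => huy⟩

theorem exists_adj_gen_add_one_eq (hv : 2 ≤ A.gen v) :
    ∃ u, A.adj v u ∧ A.gen u + 1 = A.gen v := by
  obtain ⟨u, x, y, hu, -, -, -, -, -, hlower⟩ := A.created v hv
  exact ⟨u, (adj_of_lower_eq hlower).1, by omega⟩

theorem exists_adj_gen_le (hv : 2 ≤ A.gen v) :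
    ∃ z, A.adj v z ∧ A.gen z ≤ max 1 (A.gen v - 3) := by
  obtain ⟨u, x, y, hu, hx, hy, hux, huy, hxy, hlower⟩ := A.created v hv
  obtain ⟨-, hvx, hvy⟩ := adj_of_lower_eq hlower
  have := A.adj_gen u x hux
  have := A.adj_gen u y huy
  have := A.adj_gen x y hxy
  by_cases hxy' : A.gen x ≤ A.gen y
  · exact ⟨x, hvx, by omega⟩
  · exact ⟨y, hvy, by omega⟩

theorem exists_lower_eq_of_adj (hux : A.adj u x) (huy : A.adj u y) (hxy : A.adj x y)
    (hx : A.gen x ≤ A.gen u) (hy : A.gen y ≤ A.gen u) :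
    ∃ v, A.gen v = A.gen u + 1 ∧ A.lower v = {u, x, y} := by
  obtain ⟨v, ⟨hv, hlower⟩, -⟩ :=
    A.attach (A.gen u) (A.gen_pos u) u x y rfl hx hy (ne_of_adj hxy) hux huy hxy
  refine ⟨v, hv, ?_⟩
  rw [← hlower]
  ext w
  simp [lower, hv]

theorem exists_gen_one_triangle : ∃ a b c : A.Vert,
    (∀ t, A.gen t = 1 ↔ t = a ∨ t = b ∨ t = c) ∧ A.adj a b ∧ A.adj a c ∧ A.adj b c := by
  obtain ⟨a, b, c, hab, hac, hbc, hU⟩ := A.U1_card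
  have hgen (t : A.Vert) : A.gen t = 1 ↔ t = a ∨ t = b ∨ t = c := by
    simpa using Set.ext_iff.1 hU t
  exact ⟨a, b, c, hgen, A.U1_complete a b (by simp [hgen]) (by simp [hgen]) hab,
    A.U1_complete a c (by simp [hgen]) (by simp [hgen]) hac,
    A.U1_complete b c (by simp [hgen]) (by simp [hgen]) hbc⟩

theorem exists_triangle (a : A.Vert) : ∃ x y, A.adj a x ∧ A.adj a y ∧ A.adj x y ∧
    A.gen x ≤ A.gen a ∧ A.gen y ≤ A.gen a := by
  by_cases ha : A.gen a = 1
  · obtain ⟨a₀, b₀, c₀, hgen, hab, hac, hbc⟩ := A.exists_gen_one_triangle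
    have h₀ : A.gen a₀ = 1 ∧ A.gen b₀ = 1 ∧ A.gen c₀ = 1 := by simp [hgen]
    rcases (hgen a).1 ha with rfl | rfl | rfl
    · exact ⟨b₀, c₀, hab, hac, hbc, by omega, by omega⟩
    · exact ⟨a₀, c₀, A.adj_symm _ _ hab, hbc, hac, by omega, by omega⟩
    · exact ⟨a₀, b₀, A.adj_symm _ _ hac, A.adj_symm _ _ hbc, hab, by omega, by omega⟩
  · have := A.gen_pos a
    obtain ⟨u, x, y, hu, hx, -, hux, -, -, hlower⟩ := A.created a (by omega)
    obtain ⟨hau, hax, -⟩ := adj_of_lower_eq hlower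
    exact ⟨u, x, hau, hax, hux, by omega, by omega⟩

theorem exists_walk_gen_one (v : A.Vert) :
    ∃ r, A.gen r = 1 ∧ ∃ p : A.graph.Walk v r, p.length < A.gen v := by
  obtain ⟨n, hn⟩ : ∃ n, A.gen v = n + 1 := ⟨A.gen v - 1, by have := A.gen_pos v; omega⟩
  induction n generalizing v with
  | zero => exact ⟨v, hn, .nil, by simp [hn]⟩
  | succ n ih =>
    obtain ⟨u, hvu, hu⟩ := exists_adj_gen_add_one_eq (v := v) (by omega)
    obtain ⟨r, hr, p, hp⟩ := ih u (by omega)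
    exact ⟨r, hr, .cons (show A.graph.Adj v u from hvu) p, by simp; omega⟩

theorem exists_walk_length_lt (u v : A.Vert) :
    ∃ p : A.graph.Walk u v, p.length < A.gen u + A.gen v := by
  obtain ⟨r, hr, p, hp⟩ := exists_walk_gen_one u
  obtain ⟨s, hs, q, hq⟩ := exists_walk_gen_one v
  by_cases hrs : r = s
  · subst hrs
    exact ⟨p.append q.reverse, by simp; omega⟩
  · have hadj : A.graph.Adj r s := A.U1_complete r s hr hs hrs
    exact ⟨p.append (.cons hadj q.reverse), by simp; omega⟩

theorem graph_connected (A : ApollonianNetwork) : A.graph.Connected := by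
  obtain ⟨a, -⟩ := A.exists_gen_one_triangle
  exact (SimpleGraph.connected_iff _).2
    ⟨fun u v => (exists_walk_length_lt u v).elim fun p _ => ⟨p⟩, ⟨a⟩⟩

theorem gen_le_max_of_mem_support (p : A.graph.Walk u v) (hp : p.length = A.graph.dist u v)
    (hx : x ∈ p.support) : A.gen x ≤ max (A.gen u) (A.gen v) := by
  by_contra! hlt
  obtain ⟨z, hz, hmax⟩ := Set.exists_max_image _ A.gen p.support.finite_toSet ⟨x, hx⟩
  have hxz : A.gen x ≤ A.gen z := hmax x hx
  have hz2 : 2 ≤ A.gen z := by have := A.gen_pos u; omega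
  have hnbrs : {y | A.graph.Adj z y ∧ y ∈ p.support} ⊆ A.lower z :=
    fun y ⟨hzy, hy⟩ => ⟨hzy, gen_lt_of_adj hzy (hmax y hy) hz2⟩
  obtain ⟨q, hq⟩ := p.exists_length_lt_of_isClique hz (by rintro rfl; omega)
    (by rintro rfl; omega) ((isClique_lower hz2).subset hnbrs)
  have := A.graph.dist_le q
  omega

theorem edist_G (x y : {v : A.Vert // A.gen v ≤ n}) :
    (A.G n).edist x y = A.graph.edist x y := by
  obtain ⟨p, hp⟩ := A.graph_connected.exists_walk_length_eq_dist x y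
  exact A.graph.induce_edist_eq_of_walk p hp fun z hz =>
    (gen_le_max_of_mem_support p hp hz).trans (max_le x.2 y.2)

theorem dist_G (x y : {v : A.Vert // A.gen v ≤ n}) :
    (A.G n).dist x y = A.graph.dist x y := by
  rw [SimpleGraph.dist, SimpleGraph.dist, edist_G]

theorem ediam_G_ne_top (A : ApollonianNetwork) (n : ℕ) : (A.G n).ediam ≠ ⊤ := by
  refine ne_top_of_le_ne_top (ENat.natCast_ne_top (2 * n)) ?_
  refine SimpleGraph.ediam_le_of_edist_le fun x y => ?_
  obtain ⟨p, hp⟩ := exists_walk_length_lt x.1 y.1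
  have := x.2
  have := y.2
  rw [edist_G]
  exact (SimpleGraph.edist_le p).trans (by norm_cast; omega)

theorem dist_le_dist_add_one_of_adj (h : A.adj u v) (w : A.Vert) :
    A.graph.dist u w ≤ A.graph.dist v w + 1 := by
  have := A.graph_connected.dist_triangle (u := u) (v := v) (w := w)
  rw [SimpleGraph.dist_eq_one_iff_adj.2 (show A.graph.Adj u v from h)] at this
  omega

theorem exists_mem_lower_dist_eq_succ (hv : 2 ≤ A.gen v) (hw : A.gen w ≤ A.gen v)
    (hne : v ≠ w) :
    ∃ p ∈ A.lower v, A.graph.dist v w = A.graph.dist p w + 1 := by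
  obtain ⟨q, hq⟩ := A.graph_connected.exists_walk_length_eq_dist v w
  cases q with
  | nil => exact absurd rfl hne
  | @cons _ p _ hvp q =>
    have hp : A.gen p ≤ A.gen v :=
      (gen_le_max_of_mem_support _ hq (by simp)).trans (max_le le_rfl hw)
    refine ⟨p, ⟨hvp, gen_lt_of_adj hvp hp hv⟩, le_antisymm ?_ ?_⟩
    · exact dist_le_dist_add_one_of_adj hvp w
    · have := A.graph.dist_le q
      simp only [SimpleGraph.Walk.length_cons] at hq
      omega

theorem exists_mem_lower_dist_eq_add_two (hv : 2 ≤ A.gen v) (hvw : A.gen v = A.gen w)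
    (hne : v ≠ w) :
    ∃ p ∈ A.lower v, ∃ q ∈ A.lower w, A.graph.dist v w = A.graph.dist p q + 2 := by
  obtain ⟨p, hp, hvp⟩ := exists_mem_lower_dist_eq_succ hv hvw.ge hne
  obtain ⟨q, hq, hwq⟩ := exists_mem_lower_dist_eq_succ (hvw ▸ hv) (hvw ▸ hp.2.le)
    (by rintro rfl; exact absurd hp.2 (by omega))
  refine ⟨p, hp, q, hq, ?_⟩
  rw [hvp, SimpleGraph.dist_comm, hwq, SimpleGraph.dist_comm]

theorem Hugs.dist_le (h : A.Hugs a v) (hz : A.gen z ≤ A.gen v) (hne : v ≠ z) :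
    A.graph.dist a z ≤ A.graph.dist v z := by
  obtain ⟨p, hp, hvp⟩ := exists_mem_lower_dist_eq_succ (two_le_gen_of_mem_lower h.1) hz hne
  rcases h.2 hp with rfl | hap
  · omega
  · have := dist_le_dist_add_one_of_adj hap z
    omega

theorem Screens.dist_le (h : A.Screens k a σ) (hz : A.gen z ≤ k) :
    A.graph.dist a z ≤ A.graph.dist σ z := by
  rcases h with rfl | ⟨hk, hσ⟩
  · exact le_rfl
  · exact hσ.dist_le (by omega) (by rintro rfl; omega)

theorem dist_le_dist_of_screens_of_gen_le (hb : A.gen b ≤ k) (hne : a ≠ b) (hab : ¬A.adj a b)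
    (hσ : A.Screens k a σ) (hτ : A.Screens k b τ) (hle : A.gen σ ≤ A.gen τ) :
    A.graph.dist a b ≤ A.graph.dist σ τ := by
  rcases hτ with rfl | ⟨-, hτ⟩
  · exact hσ.dist_le hb
  have hστ : σ ≠ τ := by
    rintro rfl
    rcases hσ with rfl | ⟨-, hσ⟩
    · exact hab hτ.1.1
    · rcases hσ.2 hτ.1 with rfl | h
      · exact hne rfl
      · exact hab h
  calc A.graph.dist a b ≤ A.graph.dist σ b := hσ.dist_le hb
    _ = A.graph.dist b σ := SimpleGraph.dist_comm
    _ ≤ A.graph.dist τ σ := hτ.dist_le hle hστ.symm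
    _ = A.graph.dist σ τ := SimpleGraph.dist_comm

theorem dist_le_dist_of_screens (ha : A.gen a ≤ k) (hb : A.gen b ≤ k) (hne : a ≠ b)
    (hab : ¬A.adj a b) (hσ : A.Screens k a σ) (hτ : A.Screens k b τ) :
    A.graph.dist a b ≤ A.graph.dist σ τ := by
  rcases le_total (A.gen σ) (A.gen τ) with hle | hle
  · exact dist_le_dist_of_screens_of_gen_le hb hne hab hσ hτ hle
  · rw [SimpleGraph.dist_comm, SimpleGraph.dist_comm (u := σ)]
    exact dist_le_dist_of_screens_of_gen_le ha hne.symm (fun h => hab (A.adj_symm _ _ h))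
      hτ hσ hle

theorem Hugs.exists_hugs_lower_eq (hv : A.Hugs a v) (hu : A.Hugs a u) (hvu : A.adj v u)
    (hlt : A.gen u < A.gen v) :
    ∃ w, A.gen w = A.gen v + 1 ∧ A.Hugs a w ∧ A.lower w = {v, u, a} := by
  obtain ⟨w, hw, hlower⟩ :=
    exists_lower_eq_of_adj hvu hv.1.1 hu.1.1 hlt.le hv.1.2.le
  refine ⟨w, hw, ⟨by simp [hlower], ?_⟩, hlower⟩
  rw [hlower, Set.insert_subset_iff, Set.insert_subset_iff, Set.singleton_subset_iff]
  exact ⟨Or.inr (A.adj_symm _ _ hv.1.1), Or.inr (A.adj_symm _ _ hu.1.1), Or.inl rfl⟩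

theorem exists_hugging_edge (a : A.Vert) (m : ℕ) : ∃ v u, A.gen v = A.gen a + 2 + m ∧
    A.gen u + 1 = A.gen v ∧ A.adj v u ∧ A.Hugs a v ∧ A.Hugs a u := by
  induction m with
  | zero =>
    obtain ⟨x, y, hax, hay, hxy, hx, hy⟩ := exists_triangle a
    obtain ⟨u, hu, hlu⟩ := exists_lower_eq_of_adj hax hay hxy hx hy
    obtain ⟨hua, hux, -⟩ := adj_of_lower_eq hlu
    obtain ⟨v, hv, hlv⟩ := exists_lower_eq_of_adj hua hux hax (by omega) (by omega)
    obtain ⟨hvu, -, -⟩ := adj_of_lower_eq hlv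
    refine ⟨v, u, by omega, by omega, hvu, ⟨by simp [hlv], ?_⟩, ⟨by simp [hlu], ?_⟩⟩
    · rw [hlv, Set.insert_subset_iff, Set.insert_subset_iff, Set.singleton_subset_iff]
      exact ⟨Or.inr (A.adj_symm _ _ hua), Or.inl rfl, Or.inr hax⟩
    · rw [hlu, Set.insert_subset_iff, Set.insert_subset_iff, Set.singleton_subset_iff]
      exact ⟨Or.inl rfl, Or.inr hax, Or.inr hay⟩
  | succ m ih =>
    obtain ⟨v, u, hv, hu, hvu, hav, hau⟩ := ih
    obtain ⟨w, hw, haw, hlw⟩ := hav.exists_hugs_lower_eq hau hvu (by omega)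
    exact ⟨w, v, by omega, by omega, (adj_of_lower_eq hlw).1, haw, hav⟩

theorem exists_tower (ha : A.gen a ≤ k) :
    ∃ v, A.gen v = k + 3 ∧ a ∈ A.lower v ∧ ∀ t ∈ A.lower v, A.Screens k a t := by
  obtain ⟨v, u, hv, hu, hvu, hav, hau⟩ := exists_hugging_edge a (k - A.gen a)
  obtain ⟨w, hw, haw, hlw⟩ := hav.exists_hugs_lower_eq hau hvu (by omega)
  refine ⟨w, by omega, haw.1, ?_⟩
  rw [hlw]
  rintro t (rfl | rfl | rfl)
  · exact Or.inr ⟨by omega, hav⟩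
  · exact Or.inr ⟨by omega, hau⟩
  · exact Or.inl rfl

theorem exists_gen_eq_add_three_dist_add_two_le (ha : A.gen a ≤ k) (hb : A.gen b ≤ k)
    (hab : 2 ≤ A.graph.dist a b) :
    ∃ v w, A.gen v = k + 3 ∧ A.gen w = k + 3 ∧ A.graph.dist a b + 2 ≤ A.graph.dist v w := by
  obtain ⟨v, hv, hav, hσ⟩ := exists_tower ha
  obtain ⟨w, hw, -, hτ⟩ := exists_tower hb
  have hne : a ≠ b := by
    rintro rfl
    simp at hab
  have hnadj : ¬A.adj a b := fun h => by
    rw [SimpleGraph.dist_eq_one_iff_adj.2 h] at hab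
    omega
  have hvw : v ≠ w := by
    rintro rfl
    rcases hτ a hav with rfl | ⟨hk, -⟩
    · exact hne rfl
    · omega
  obtain ⟨p, hp, q, hq, hpq⟩ :=
    exists_mem_lower_dist_eq_add_two (by omega) (hv.trans hw.symm) hvw
  have := dist_le_dist_of_screens ha hb hne hnadj (hσ p hp) (hτ q hq)
  exact ⟨v, w, hv, hw, by omega⟩

theorem three_le_dist_of_disjoint_lower (hv : 2 ≤ A.gen v) (hvw : A.gen v = A.gen w)
    (hdisj : Disjoint (A.lower v) (A.lower w)) : 3 ≤ A.graph.dist v w := by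
  have hne : v ≠ w := by
    rintro rfl
    obtain ⟨u, hvu, hu⟩ := exists_adj_gen_add_one_eq hv
    exact Set.disjoint_left.1 hdisj ⟨hvu, by omega⟩ ⟨hvu, by omega⟩
  obtain ⟨p, hp, q, hq, hpq⟩ := exists_mem_lower_dist_eq_add_two hv hvw hne
  have hpq' : p ≠ q := fun e => Set.disjoint_left.1 hdisj hp (e ▸ hq)
  have := A.graph_connected.pos_dist_of_ne hpq'
  omega

theorem exists_gen_eq_four_three_le_dist :
    ∃ v w : A.Vert, A.gen v = 4 ∧ A.gen w = 4 ∧ 3 ≤ A.graph.dist v w := by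
  obtain ⟨a, b, c, hgen, hab, hac, hbc⟩ := A.exists_gen_one_triangle
  obtain ⟨ha, hb, hc⟩ : A.gen a = 1 ∧ A.gen b = 1 ∧ A.gen c = 1 := by simp [hgen]
  obtain ⟨h, hh, hlh⟩ := exists_lower_eq_of_adj hab hac hbc (by omega) (by omega)
  obtain ⟨hha, hhb, hhc⟩ := adj_of_lower_eq hlh
  obtain ⟨t, ht, hlt⟩ := exists_lower_eq_of_adj hha hhb hab (by omega) (by omega)
  obtain ⟨t', ht', hlt'⟩ := exists_lower_eq_of_adj hha hhc hac (by omega) (by omega)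
  obtain ⟨-, hta, htb⟩ := adj_of_lower_eq hlt
  obtain ⟨ht'h, -, ht'c⟩ := adj_of_lower_eq hlt'
  obtain ⟨v, hv, hlv⟩ := exists_lower_eq_of_adj hta htb hab (by omega) (by omega)
  obtain ⟨w, hw, hlw⟩ := exists_lower_eq_of_adj ht'h ht'c hhc (by omega) (by omega)
  have hne {x y : A.Vert} (h : A.gen x ≠ A.gen y) : x ≠ y := fun e => h (congrArg A.gen e)
  have hca : c ≠ a := ne_of_adj (A.adj_symm _ _ hac)
  have hcb : c ≠ b := ne_of_adj (A.adj_symm _ _ hbc)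
  have htt' : t ≠ t' := by
    rintro rfl
    have : c ∈ A.lower t := by simp [hlt']
    simp only [hlt, Set.mem_insert_iff, Set.mem_singleton_iff] at this
    exact this.elim (hne (by omega)) (Or.elim · hca hcb)
  refine ⟨v, w, by omega, by omega, three_le_dist_of_disjoint_lower (by omega) (by omega) ?_⟩
  rw [hlv, hlw]
  simp only [Set.disjoint_insert_left, Set.disjoint_insert_right, Set.disjoint_singleton,
    Set.mem_insert_iff, Set.mem_singleton_iff, not_or]
  exact ⟨⟨htt'.symm, hne (by omega), hne (by omega)⟩, ⟨hne (by omega), hne (by omega),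
    hne (by omega)⟩, hne (by omega), hca.symm, hcb.symm⟩

theorem exists_diam_G_add_two_le_dist (hk : 1 ≤ k) : ∃ v w : A.Vert, A.gen v ≤ k + 3 ∧
    A.gen w ≤ k + 3 ∧ (A.G k).diam + 2 ≤ A.graph.dist v w := by
  obtain ⟨a, b, c, hgen, -⟩ := A.exists_gen_one_triangle
  have : Nonempty {v : A.Vert // A.gen v ≤ k} :=
    ⟨⟨a, ((hgen a).2 (Or.inl rfl)).trans_le hk⟩⟩
  obtain ⟨x, y, hxy⟩ := (A.G k).exists_dist_eq_diam
  rw [dist_G] at hxy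
  by_cases hD : 2 ≤ (A.G k).diam
  · obtain ⟨v, w, hv, hw, h⟩ := exists_gen_eq_add_three_dist_add_two_le x.2 y.2 (hxy ▸ hD)
    exact ⟨v, w, hv.le, hw.le, hxy ▸ h⟩
  · obtain ⟨v, w, hv, hw, h⟩ := A.exists_gen_eq_four_three_le_dist
    exact ⟨v, w, by omega, by omega, by omega⟩

theorem exists_gen_le_dist_le_one (hk : 1 ≤ k) (hu : A.gen u ≤ k + 3) :
    ∃ z, A.gen z ≤ k ∧ A.graph.dist u z ≤ 1 := by
  by_cases h : A.gen u ≤ k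
  · exact ⟨u, h, by simp⟩
  · obtain ⟨z, huz, hz⟩ := exists_adj_gen_le (v := u) (by omega)
    exact ⟨z, by omega, (SimpleGraph.dist_eq_one_iff_adj.2 huz).le⟩

theorem dist_le_diam_G_add_two (hk : 1 ≤ k) (hu : A.gen u ≤ k + 3) (hv : A.gen v ≤ k + 3) :
    A.graph.dist u v ≤ (A.G k).diam + 2 := by
  obtain ⟨z, hz, huz⟩ := exists_gen_le_dist_le_one hk hu
  obtain ⟨z', hz', hvz'⟩ := exists_gen_le_dist_le_one hk hv
  have hzz' : A.graph.dist z z' ≤ (A.G k).diam :=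
    dist_G (x := ⟨z, hz⟩) (y := ⟨z', hz'⟩) ▸ SimpleGraph.dist_le_diam (A.ediam_G_ne_top k)
  have h₁ := A.graph_connected.dist_triangle (u := u) (v := z) (w := v)
  have h₂ := A.graph_connected.dist_triangle (u := z) (v := z') (w := v)
  rw [SimpleGraph.dist_comm (u := z')] at h₂
  omega

end ApollonianNetwork

open ApollonianNetwork

theorem stmt18 (A : ApollonianNetwork) (k : ℕ) (hk : 1 ≤ k) :
    (A.G (k + 3)).diam = (A.G k).diam + 2 := by
  refine le_antisymm (SimpleGraph.diam_le_of_forall_dist_le fun x y => ?_) ?_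
  · exact dist_G x y ▸ dist_le_diam_G_add_two hk x.2 y.2
  · obtain ⟨v, w, hv, hw, hvw⟩ := exists_diam_G_add_two_le_dist (A := A) hk
    calc (A.G k).diam + 2 ≤ A.graph.dist v w := hvw
      _ = (A.G (k + 3)).dist ⟨v, hv⟩ ⟨w, hw⟩ := (dist_G ⟨v, hv⟩ ⟨w, hw⟩).symm
      _ ≤ (A.G (k + 3)).diam := SimpleGraph.dist_le_diam (A.ediam_G_ne_top _)
end
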